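/- Let n ≥ 2 and let λ ∈ ℝⁿ with λ ∈ Γ₂. Define μ ∈ ℝⁿ by μ_i = λ_i − (σ₂(λ)/σ₁(λ))/(n−1) for every i. Then μ ∈ Γ₂, i.e. σ₁(μ) > 0 and σ₂(μ) > 0. -/
import Mathlib


/-- The `k`-th elementary symmetric polynomial `σ_k` of `λ ∈ ℝⁿ`. -/
noncomputable def sigma (n k : ℕ) (lam : Fin n → ℝ) : ℝ :=
  ∑ s ∈ Finset.univ.powersetCard k, ∏ i ∈ s, lam i

/-- Gårding's cone `Γ_k`: all `σ_l`, `1 ≤ l ≤ k`, are positive. -/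
def InGamma (n k : ℕ) (lam : Fin n → ℝ) : Prop :=
  ∀ l : ℕ, 1 ≤ l → l ≤ k → 0 < sigma n l lam

lemma sigma_one (n : ℕ) (f : Fin n → ℝ) : sigma n 1 f = ∑ i, f i := by
  simp [sigma, Finset.powersetCard_one]

lemma two_sigma_two (n : ℕ) (f : Fin n → ℝ) :
    2 * sigma n 2 f = (∑ i, f i)^2 - ∑ i, (f i)^2 := by
  have hsplit : (∑ i, f i)^2 = (∑ i, (f i)^2) + ∑ p ∈ Finset.univ.offDiag, f p.1 * f p.2 := by
    rw [sq, Finset.sum_mul_sum, ← Finset.sum_product', ← Finset.diag_union_offDiag (Finset.univ : Finset (Fin n)),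
      Finset.sum_union (Finset.disjoint_diag_offDiag _), Finset.sum_diag]
    ring_nf
  have hfib : ∑ p ∈ Finset.univ.offDiag, f p.1 * f p.2 = 2 * sigma n 2 f := by
    have hmaps : ∀ p ∈ (Finset.univ : Finset (Fin n)).offDiag,
        ({p.1, p.2} : Finset (Fin n)) ∈ Finset.univ.powersetCard 2 := by
      intro p hp
      rw [Finset.mem_offDiag] at hp
      simp [Finset.mem_powersetCard, Finset.card_pair hp.2.2]
    rw [← Finset.sum_fiberwise_of_maps_to hmaps (fun p => f p.1 * f p.2), sigma,
      Finset.mul_sum]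
    apply Finset.sum_congr rfl
    intro b hb
    rw [Finset.mem_powersetCard] at hb
    obtain ⟨x, y, hxy, rfl⟩ := Finset.card_eq_two.mp hb.2
    have hset : (Finset.univ.offDiag.filter (fun p : Fin n × Fin n => ({p.1, p.2} : Finset (Fin n)) = {x, y}))
        = {(x, y), (y, x)} := by
      ext p
      simp only [Finset.mem_filter, Finset.mem_offDiag, Finset.mem_insert, Finset.mem_singleton,
        Finset.mem_univ, true_and]
      constructor
      · rintro ⟨hne, heq⟩
        have h1 : p.1 ∈ ({x, y} : Finset (Fin n)) := heq ▸ by simp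
        have h2 : p.2 ∈ ({x, y} : Finset (Fin n)) := heq ▸ by simp
        simp only [Finset.mem_insert, Finset.mem_singleton] at h1 h2
        rcases h1 with h1 | h1 <;> rcases h2 with h2 | h2
        · exact absurd (h1.trans h2.symm) hne
        · left; exact Prod.ext h1 h2
        · right; exact Prod.ext h1 h2
        · exact absurd (h1.trans h2.symm) hne
      · rintro (rfl | rfl)
        · exact ⟨hxy, rfl⟩
        · exact ⟨hxy.symm, by rw [Finset.pair_comm]⟩
    rw [hset, Finset.sum_insert (by simp [Prod.ext_iff, hxy]), Finset.sum_singleton,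
      Finset.prod_insert (by simp [hxy]), Finset.prod_singleton]
    ring
  linarith [hsplit, hfib]


theorem stmt_4' (n : ℕ) (hn : 2 ≤ n) (lam : Fin n → ℝ) (hlam : (∀ l : ℕ, 1 ≤ l → l ≤ 2 → 0 < sigma n l lam))
    (mu : Fin n → ℝ)
    (hmu : ∀ i, mu i = lam i - (sigma n 2 lam / sigma n 1 lam) / ((n : ℝ) - 1)) :
    0 < sigma n 1 mu ∧ 0 < sigma n 2 mu := by
  set t : ℝ := (sigma n 2 lam / sigma n 1 lam) / ((n : ℝ) - 1) with ht
  have hN : (2 : ℝ) ≤ (n : ℝ) := by exact_mod_cast hn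
  have hn1 : (0:ℝ) < (n : ℝ) - 1 := by linarith
  have h1 : 0 < sigma n 1 lam := hlam 1 le_rfl (by norm_num)
  have h2 : 0 < sigma n 2 lam := hlam 2 (by norm_num) le_rfl
  set S : ℝ := ∑ i, lam i with hS
  set Q : ℝ := ∑ i, (lam i)^2 with hQ
  have hS1 : sigma n 1 lam = S := sigma_one n lam
  have hS2 : 2 * sigma n 2 lam = S^2 - Q := two_sigma_two n lam
  have hSpos : 0 < S := hS1 ▸ h1
  have hQpos : 0 < Q := by
    rcases (lt_or_eq_of_le (Finset.sum_nonneg (fun i (_ : i ∈ Finset.univ) => sq_nonneg (lam i)))) with h | h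
    · exact h
    · exfalso
      have hz : ∀ i ∈ Finset.univ, (lam i)^2 = 0 :=
        (Finset.sum_eq_zero_iff_of_nonneg (fun i _ => sq_nonneg (lam i))).mp h.symm
      have : S = 0 := Finset.sum_eq_zero (fun i hi => by nlinarith [hz i hi])
      linarith
  have htpos : 0 < t := by
    rw [ht]
    exact div_pos (div_pos h2 h1) hn1
  have hSn1 : S * ((n:ℝ) - 1) ≠ 0 := by positivity
  have hteq : t * (S * ((n : ℝ) - 1)) = sigma n 2 lam := by
    rw [ht, hS1, div_div]
    exact div_mul_cancel₀ _ hSn1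
  have hS1mu : sigma n 1 mu = S - (n : ℝ) * t := by
    rw [sigma_one]
    simp only [hmu, ← ht, Finset.sum_sub_distrib, Finset.sum_const, Finset.card_univ,
      Fintype.card_fin, nsmul_eq_mul, hS]
  have hQmu : ∑ i, (mu i)^2 = Q - 2*t*S + (n : ℝ)*t^2 := by
    have he : ∀ i, (mu i)^2 = (lam i)^2 - 2*t*(lam i) + t^2 := fun i => by rw [hmu i]; ring
    simp only [he, Finset.sum_add_distrib, Finset.sum_sub_distrib, ← Finset.mul_sum,
      Finset.sum_const, Finset.card_univ, Fintype.card_fin, nsmul_eq_mul, hS, hQ]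
  have hS2mu : 2 * sigma n 2 mu = (S - (n:ℝ)*t)^2 - (Q - 2*t*S + (n : ℝ)*t^2) := by
    have hsum : ∑ i, mu i = S - (n:ℝ)*t := by rw [← sigma_one]; exact hS1mu
    rw [two_sigma_two, hsum, hQmu]
  have hfirst : 0 < sigma n 1 mu := by
    rw [hS1mu]
    have hkey : (S - (n:ℝ)*t) * (S*((n:ℝ)-1)) = ((n:ℝ)-2)*S^2/2 + (n:ℝ)*Q/2 := by
      linear_combination (-(n:ℝ))*hteq - ((n:ℝ)/2)*hS2
    have hrhs : 0 < ((n:ℝ)-2)*S^2/2 + (n:ℝ)*Q/2 := by nlinarith [sq_nonneg S, hQpos, hN]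
    have hmulpos : 0 < (S - (n:ℝ)*t) * (S*((n:ℝ)-1)) := hkey ▸ hrhs
    by_contra hc
    push_neg at hc
    nlinarith [mul_nonpos_of_nonpos_of_nonneg hc (le_of_lt (mul_pos hSpos hn1))]
  refine ⟨hfirst, ?_⟩
  have h2mu : 2 * sigma n 2 mu = (n:ℝ)*((n:ℝ)-1)*t^2 := by
    linear_combination hS2mu - hS2 - 2*hteq
  nlinarith [mul_pos (mul_pos (by linarith : (0:ℝ) < (n:ℝ)) hn1) (pow_pos htpos 2), h2mu]


theorem stmt_4 (n : ℕ) (hn : 2 ≤ n) (lam : Fin n → ℝ) (hlam : InGamma n 2 lam)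
    (mu : Fin n → ℝ)
    (hmu : ∀ i, mu i = lam i - (sigma n 2 lam / sigma n 1 lam) / ((n : ℝ) - 1)) :
    InGamma n 2 mu ∧ 0 < sigma n 1 mu ∧ 0 < sigma n 2 mu := by
  obtain ⟨h1, h2⟩ := stmt_4' n hn lam hlam mu hmu
  refine ⟨?_, h1, h2⟩
  intro l hl1 hl2
  interval_cases l
  · exact h1
  · exact h2
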